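/- Let G be a graph of order at least 3 and maximum degree at most 3, and let S be a set of vertices of G such that w_{(G,S)}(u) ≥ 3 for every u ∈ V(G) \ S. Then |S| ≥ (n(G) + 6)/4. -/

import Mathlib

open Finset

/-- `sdist G S u v` : minimum number of edges of a walk in `G` from `u` to `v`
whose only vertex in `S` is the endvertex `v` (`⊤` if none exists). -/
noncomputable def sdist {V : Type*} (G : SimpleGraph V) (S : Set V) (u v : V) : ℕ∞ :=
  ⨅ p : {p : G.Walk u v // ∀ x ∈ p.support, x ∈ S → x = v}, ((p : G.Walk u v).length : ℕ∞)

/-- `expWeight G S u = ∑_{v ∈ S} (1/2)^(sdist G S u v - 1)`, with `(1/2)^∞ = 0`.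
Note `(1/2)^(d-1) = 2 * (1/2)^d`. -/
noncomputable def expWeight {V : Type*} (G : SimpleGraph V) (S : Finset V) (u : V) : ℝ :=
  ∑ v ∈ S, if sdist G (↑S) u v = ⊤ then 0 else 2 * (1 / 2 : ℝ) ^ (sdist G (↑S) u v).toNat

/-- `S` is an exponential dominating set of `G`. -/
def IsExpDomSet {V : Type*} (G : SimpleGraph V) (S : Finset V) : Prop :=
  ∀ u, u ∉ S → 1 ≤ expWeight G S u

/-- The exponential domination number of `G`. -/
noncomputable def expDomNum (V : Type*) [Fintype V] (G : SimpleGraph V) : ℕ :=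
  sInf {k | ∃ S : Finset V, IsExpDomSet G S ∧ S.card = k}

section
variable {V : Type*} (G : SimpleGraph V)

/-- validity predicate -/
def ok (S : Set V) {u v : V} (p : G.Walk u v) : Prop := ∀ x ∈ p.support, x ∈ S → x = v

variable {G}

lemma sdist_le {S : Set V} {u v : V} {p : G.Walk u v} (hp : ok G S p) :
    sdist G S u v ≤ p.length := iInf_le _ (⟨p, hp⟩ : {p : G.Walk u v // ∀ x ∈ p.support, x ∈ S → x = v})

lemma sdist_eq_top {S : Set V} {u v : V} (h : ∀ p : G.Walk u v, ¬ ok G S p) :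
    sdist G S u v = ⊤ := by
  have : IsEmpty {p : G.Walk u v // ∀ x ∈ p.support, x ∈ S → x = v} :=
    ⟨fun p => h p.1 p.2⟩
  exact iInf_of_empty _

lemma sdist_eq_top_of_mem {S : Set V} {u v : V} (hu : u ∈ S) (huv : u ≠ v) :
    sdist G S u v = ⊤ := by
  refine sdist_eq_top fun p hp => huv (hp u p.start_mem_support hu)

/-- existence of a minimal valid path when sdist is finite -/
lemma exists_min_path {S : Set V} {u v : V} (h : sdist G S u v ≠ ⊤) :
    ∃ p : G.Walk u v, ok G S p ∧ p.IsPath ∧ (p.length : ℕ∞) = sdist G S u v ∧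
      ∀ q : G.Walk u v, ok G S q → p.length ≤ q.length := by
  classical
  have hne : Nonempty {p : G.Walk u v // ∀ x ∈ p.support, x ∈ S → x = v} := by
    by_contra hc
    rw [not_nonempty_iff] at hc
    exact h (iInf_of_empty _)
  have hex : ∃ n : ℕ, ∃ p : G.Walk u v, ok G S p ∧ p.length = n := by
    obtain ⟨⟨p, hp⟩⟩ := hne
    exact ⟨p.length, p, hp, rfl⟩
  set n0 := Nat.find hex with hn0
  obtain ⟨p0, hp0, hlen0⟩ := Nat.find_spec hex
  have hmin : ∀ q : G.Walk u v, ok G S q → n0 ≤ q.length := by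
    intro q hq
    exact Nat.find_le ⟨q, hq, rfl⟩
  have hokb : ok G S p0.bypass := fun x hx hxS => hp0 x (p0.support_bypass_subset hx) hxS
  have hlb : p0.bypass.length = n0 := by
    have h1 := p0.length_bypass_le
    have h2 := hmin _ hokb
    omega
  have hsd : sdist G S u v = (n0 : ℕ∞) := by
    refine le_antisymm ?_ ?_
    · have := sdist_le (G := G) hokb
      rwa [hlb] at this
    · refine le_iInf fun q => ?_
      exact_mod_cast hmin q.1 q.2
  exact ⟨p0.bypass, hokb, p0.bypass_isPath, by rw [hlb, hsd], by rw [hlb]; exact hmin⟩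

lemma sdist_self {S : Set V} (v : V) : sdist G S v v = 0 := by
  refine le_antisymm ?_ zero_le
  have : ok G S (SimpleGraph.Walk.nil : G.Walk v v) := by
    intro x hx _
    simpa using hx
  simpa using sdist_le this

lemma sdist_ne_zero {S : Set V} {u v : V} (h : u ≠ v) : sdist G S u v ≠ 0 := by
  intro h0
  have hne : sdist G S u v ≠ ⊤ := by rw [h0]; simp
  obtain ⟨p, _, _, hlen, _⟩ := exists_min_path hne
  rw [h0] at hlen
  exact h (SimpleGraph.Walk.eq_of_length_eq_zero (by exact_mod_cast hlen))

lemma sdist_adj_le_one {S : Set V} {u v : V} (h : G.Adj u v) (hu : u ∉ S) :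
    sdist G S u v ≤ 1 := by
  have : ok G S (SimpleGraph.Walk.cons h SimpleGraph.Walk.nil) := by
    intro x hx hxS
    simp only [SimpleGraph.Walk.support_cons, SimpleGraph.Walk.support_nil, List.mem_cons, List.mem_singleton] at hx
    rcases hx with rfl | hx
    · exact absurd hxS hu
    · simpa using hx
  simpa using sdist_le this

/-- the summand of expWeight -/
noncomputable def tm (G : SimpleGraph V) (S : Set V) (u v : V) : ℝ :=
  if sdist G S u v = ⊤ then 0 else 2 * (1 / 2 : ℝ) ^ (sdist G S u v).toNat

lemma tm_nonneg {S : Set V} {u v : V} : 0 ≤ tm G S u v := by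
  unfold tm; split <;> positivity

lemma tm_pos {S : Set V} {u v : V} (h : sdist G S u v ≠ ⊤) : 0 < tm G S u v := by
  unfold tm; rw [if_neg h]; positivity

lemma sdist_ne_top_of_tm {S : Set V} {u v : V} (h : tm G S u v ≠ 0) : sdist G S u v ≠ ⊤ := by
  intro ht; exact h (by unfold tm; rw [if_pos ht])

lemma tm_ge {S : Set V} {u v : V} {k : ℕ} (h : sdist G S u v ≤ (k : ℕ∞)) :
    2 * (1 / 2 : ℝ) ^ k ≤ tm G S u v := by
  have hne : sdist G S u v ≠ ⊤ := fun ht => by simp [ht] at h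
  have htn : (sdist G S u v).toNat ≤ k := by
    lift sdist G S u v to ℕ using hne with d hd
    exact_mod_cast h
  unfold tm
  rw [if_neg hne]
  have := pow_le_pow_of_le_one (by norm_num : (0:ℝ) ≤ 1/2) (by norm_num) htn
  nlinarith

lemma tm_le {S : Set V} {u v : V} {k : ℕ} (h : (k : ℕ∞) ≤ sdist G S u v) :
    tm G S u v ≤ 2 * (1 / 2 : ℝ) ^ k := by
  unfold tm
  split
  · positivity
  · rename_i hne
    have htn : k ≤ (sdist G S u v).toNat := by
      lift sdist G S u v to ℕ using hne with d hd
      exact_mod_cast h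
    have := pow_le_pow_of_le_one (by norm_num : (0:ℝ) ≤ 1/2) (by norm_num) htn
    nlinarith

lemma tm_le_two {S : Set V} {u v : V} : tm G S u v ≤ 2 := by
  have := tm_le (G := G) (S := S) (u := u) (v := v) (k := 0) zero_le
  simpa using this


lemma tm_eq_of {S : Set V} {u v : V} {k : ℕ} (h : sdist G S u v = (k : ℕ∞)) :
    tm G S u v = 2 * (1 / 2 : ℝ) ^ k := by
  unfold tm
  rw [h]
  simp

lemma tm_le_one {S : Set V} {u v : V} (h : u ≠ v) : tm G S u v ≤ 1 := by
  have h1 : (1 : ℕ∞) ≤ sdist G S u v := by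
    rw [ENat.one_le_iff_ne_zero]
    exact sdist_ne_zero h
  have := tm_le (G := G) h1
  simpa using this

lemma tm_self {S : Set V} (v : V) : tm G S v v = 2 := by
  have := tm_eq_of (G := G) (S := S) (u := v) (v := v) (k := 0) (by simpa using sdist_self v)
  simpa using this

lemma tm_eq_zero_of_mem {S : Set V} {u v : V} (hu : u ∈ S) (h : u ≠ v) : tm G S u v = 0 := by
  unfold tm
  rw [if_pos (sdist_eq_top_of_mem hu h)]

lemma tm_adj_eq_one {S : Set V} {u v : V} (h : G.Adj u v) (hu : u ∉ S) : tm G S u v = 1 := by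
  refine le_antisymm (tm_le_one h.ne) ?_
  have := tm_ge (G := G) (k := 1) (sdist_adj_le_one h hu)
  simpa using this

lemma half_tm_insert_le {S : Set V} {x y v : V} (hx : x ∉ S) (hadj : G.Adj x y) :
    (1 / 2 : ℝ) * tm G (insert x S) y v ≤ tm G S x v := by
  by_cases h : sdist G (insert x S) y v = ⊤
  · rw [tm, if_pos h]
    simpa using tm_nonneg (G := G) (S := S) (u := x) (v := v)
  · obtain ⟨q, hq, _, hlen, _⟩ := exists_min_path h
    set k := q.length with hk
    have hok : ok G S (SimpleGraph.Walk.cons hadj q) := by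
      intro z hz hzS
      rw [SimpleGraph.Walk.support_cons, List.mem_cons] at hz
      rcases hz with rfl | hz
      · exact absurd hzS hx
      · exact hq z hz (Set.mem_insert_of_mem _ hzS)
    have hle : sdist G S x v ≤ ((k + 1 : ℕ) : ℕ∞) := by
      have := sdist_le hok
      simpa [hk] using this
    have h1 := tm_ge (G := G) hle
    have h2 : tm G (insert x S) y v = 2 * (1 / 2 : ℝ) ^ k := tm_eq_of hlen.symm
    rw [h2]
    rw [pow_succ] at h1
    nlinarith

lemma exists_branch {S : Set V} {x v : V} (hx : x ∉ S) (hv : v ∈ S) (h : tm G S x v ≠ 0) :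
    ∃ y, G.Adj x y ∧ tm G S x v ≤ (1 / 2 : ℝ) * tm G (insert x S) y v := by
  have hne := sdist_ne_top_of_tm h
  obtain ⟨p, hok, hpath, hlen, _⟩ := exists_min_path hne
  have hxv : x ≠ v := fun hxv => hx (hxv ▸ hv)
  cases p with
  | nil => exact absurd rfl hxv
  | @cons _ y _ hadj q =>
    refine ⟨y, hadj, ?_⟩
    rw [SimpleGraph.Walk.cons_isPath_iff] at hpath
    have hokq : ok G (insert x S) q := by
      intro z hz hzS
      rcases Set.mem_insert_iff.mp hzS with rfl | hzS'
      · exact absurd hz hpath.2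
      · exact hok z (by rw [SimpleGraph.Walk.support_cons]; exact List.mem_cons_of_mem _ hz) hzS'
    have hq : sdist G (insert x S) y v ≤ (q.length : ℕ∞) := sdist_le hokq
    have h1 := tm_ge (G := G) hq
    have h2 : tm G S x v = 2 * (1 / 2 : ℝ) ^ (q.length + 1) := by
      refine tm_eq_of ?_
      rw [← hlen]
      norm_cast
    rw [h2, pow_succ]
    nlinarith


variable [Fintype V] [DecidableEq V] [DecidableRel G.Adj]
set_option linter.unusedSectionVars false

lemma expWeight_eq (S : Finset V) (u : V) :
    expWeight G S u = ∑ v ∈ S, tm G (↑S) u v := rfl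

lemma tm_le_cov {S : Finset V} {x v : V} (hx : x ∉ S) (hv : v ∈ S) :
    tm G (↑S) x v ≤ ∑ y ∈ G.neighborFinset x, (1 / 2 : ℝ) * tm G (insert x (↑S)) y v := by
  by_cases h : tm G (↑S) x v = 0
  · rw [h]
    refine Finset.sum_nonneg fun y _ => ?_
    have := tm_nonneg (G := G) (S := insert x (↑S : Set V)) (u := y) (v := v)
    linarith
  · obtain ⟨y0, hadj, hle⟩ := exists_branch (by exact_mod_cast hx) (by exact_mod_cast hv) h
    refine le_trans hle ?_
    refine Finset.single_le_sum (f := fun y => (1 / 2 : ℝ) * tm G (insert x (↑S)) y v)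
      (fun y _ => ?_) ((G.mem_neighborFinset x y0).mpr hadj)
    have := tm_nonneg (G := G) (S := insert x (↑S : Set V)) (u := y) (v := v)
    linarith

lemma bsum_mem {S : Finset V} {x y : V} (hy : y ∈ S) :
    ∑ v ∈ S, (1 / 2 : ℝ) * tm G (insert x (↑S)) y v = 1 := by
  rw [Finset.sum_eq_single y]
  · rw [tm_self]; norm_num
  · intro v hv hne
    rw [tm_eq_zero_of_mem (Set.mem_insert_of_mem _ (by exact_mod_cast hy)) (Ne.symm hne)]
    ring
  · intro h; exact absurd hy h

lemma bsum_not_mem {S : Finset V} {x y : V} (hx : x ∉ S) (hy : y ∉ S) (hadj : G.Adj x y) :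
    ∑ v ∈ S, (1 / 2 : ℝ) * tm G (insert x (↑S)) y v
      = (expWeight G (insert x S) y - 1) / 2 := by
  have hyx : y ∉ insert x (↑S : Set V) := by
    intro hmem
    rcases Set.mem_insert_iff.mp hmem with rfl | h
    · exact G.irrefl hadj
    · exact hy (by exact_mod_cast h)
  have h1 : expWeight G (insert x S) y
      = tm G (insert x (↑S)) y x + ∑ v ∈ S, tm G (insert x (↑S)) y v := by
    rw [expWeight_eq, Finset.sum_insert hx]
    congr 1 <;> [skip; refine Finset.sum_congr rfl fun v _ => ?_] <;>
      simp [Finset.coe_insert]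
  have h2 : tm G (insert x (↑S)) y x = 1 := tm_adj_eq_one hadj.symm hyx
  have h3 : ∑ v ∈ S, (1 / 2 : ℝ) * tm G (insert x (↑S)) y v
      = (∑ v ∈ S, tm G (insert x (↑S)) y v) / 2 := by
    rw [Finset.sum_div]
    exact Finset.sum_congr rfl fun v _ => by ring
  rw [h3, h1, h2]
  ring


theorem kraft (hG : ∀ v, G.degree v ≤ 3) :
    ∀ (m : ℕ) (S : Finset V) (x : V), Fintype.card V - S.card ≤ m → x ∉ S →
      expWeight G S x ≤ (G.degree x : ℝ) := by
  intro m
  induction m with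
  | zero =>
    intro S x hm hx
    have : S.card ≤ Fintype.card V := S.card_le_univ
    have hcard : S.card = Fintype.card V := by omega
    have hU : S = Finset.univ := Finset.eq_univ_of_card S hcard
    subst hU
    exact absurd (Finset.mem_univ x) hx
  | succ m ih =>
    intro S x hm hx
    have hstep : expWeight G S x
        ≤ ∑ v ∈ S, ∑ y ∈ G.neighborFinset x, (1 / 2 : ℝ) * tm G (insert x (↑S)) y v := by
      rw [expWeight_eq]
      exact Finset.sum_le_sum fun v hv => tm_le_cov hx hv
    rw [Finset.sum_comm] at hstep
    have hB : ∀ y ∈ G.neighborFinset x,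
        ∑ v ∈ S, (1 / 2 : ℝ) * tm G (insert x (↑S)) y v ≤ 1 := by
      intro y hy
      have hadj := (G.mem_neighborFinset x y).mp hy
      by_cases hyS : y ∈ S
      · rw [bsum_mem hyS]
      · rw [bsum_not_mem hx hyS hadj]
        have hih : expWeight G (insert x S) y ≤ (G.degree y : ℝ) := by
          refine ih (insert x S) y ?_ ?_
          · rw [Finset.card_insert_of_notMem hx]; omega
          · simp [Finset.mem_insert, hyS]
            exact fun h => G.irrefl (h ▸ hadj)
        have : (G.degree y : ℝ) ≤ 3 := by exact_mod_cast hG y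
        linarith
    calc expWeight G S x ≤ _ := hstep
      _ ≤ ∑ _y ∈ G.neighborFinset x, (1 : ℝ) := Finset.sum_le_sum hB
      _ = (G.degree x : ℝ) := by
          rw [Finset.sum_const, G.card_neighborFinset_eq_degree]
          simp


end

section KR
variable {V : Type*} {G : SimpleGraph V} [Fintype V] [DecidableEq V] [DecidableRel G.Adj]
set_option linter.unusedSectionVars false

noncomputable def Rset (G : SimpleGraph V) (S : Finset V) (x : V) : Finset V :=
  @Finset.filter V (fun v => sdist G (↑S) x v ≠ ⊤) (Classical.decPred _) S

noncomputable def Kset (G : SimpleGraph V) [Fintype V] (S : Finset V) (x : V) : Finset V :=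
  @Finset.filter V (fun z => ∃ p : G.Walk x z, ∀ a ∈ p.support, a ∉ (↑S : Set V))
    (Classical.decPred _) Finset.univ

lemma mem_Rset {S : Finset V} {x v : V} :
    v ∈ Rset G S x ↔ v ∈ S ∧ sdist G (↑S) x v ≠ ⊤ := by
  rw [Rset, @Finset.mem_filter _ _ (Classical.decPred _)]

lemma mem_Kset {S : Finset V} {x z : V} :
    z ∈ Kset G S x ↔ ∃ p : G.Walk x z, ∀ a ∈ p.support, a ∉ (↑S : Set V) := by
  rw [Kset, @Finset.mem_filter _ _ (Classical.decPred _)]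
  simp only [Finset.mem_univ, true_and]

lemma mem_Kset_self {S : Finset V} {x : V} (hx : x ∉ S) : x ∈ Kset G S x := by
  rw [mem_Kset]
  exact ⟨SimpleGraph.Walk.nil, fun a ha => by simp at ha; subst ha; exact_mod_cast hx⟩

lemma Kset_subset {S : Finset V} {x z : V} (hz : z ∈ Kset G S x) : z ∉ S := by
  rw [mem_Kset] at hz
  obtain ⟨p, hp⟩ := hz
  exact fun h => hp z p.end_mem_support (by exact_mod_cast h)

lemma Kset_eq {S : Finset V} {x z : V} (hz : z ∈ Kset G S x) : Kset G S x = Kset G S z := by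
  rw [mem_Kset] at hz
  obtain ⟨p, hp⟩ := hz
  ext w
  rw [mem_Kset, mem_Kset]
  constructor
  · rintro ⟨q, hq⟩
    refine ⟨(p.reverse).append q, fun a ha => ?_⟩
    rw [SimpleGraph.Walk.mem_support_append_iff] at ha
    rcases ha with ha | ha
    · exact hp a (by rwa [SimpleGraph.Walk.support_reverse, List.mem_reverse] at ha)
    · exact hq a ha
  · rintro ⟨q, hq⟩
    refine ⟨p.append q, fun a ha => ?_⟩
    rw [SimpleGraph.Walk.mem_support_append_iff] at ha
    rcases ha with ha | ha
    · exact hp a ha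
    · exact hq a ha

lemma Kset_empty_of_mem {S : Finset V} {y : V} (hy : y ∈ S) : Kset G S y = ∅ := by
  rw [Finset.eq_empty_iff_forall_notMem]
  intro z hz
  rw [mem_Kset] at hz
  obtain ⟨p, hp⟩ := hz
  exact hp y p.start_mem_support (by exact_mod_cast hy)

/-- decomposition of Kset over neighbors -/
lemma Kset_decomp {S : Finset V} {x : V} (hx : x ∉ S) :
    Kset G S x ⊆ insert x ((G.neighborFinset x).biUnion fun y => Kset G (insert x S) y) := by
  intro z hz
  rw [mem_Kset] at hz
  obtain ⟨p, hp⟩ := hz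
  have hpb : ∀ a ∈ p.bypass.support, a ∉ (↑S : Set V) :=
    fun a ha => hp a (p.support_bypass_subset ha)
  have hpath := p.bypass_isPath
  rw [Finset.mem_insert]
  cases hq : p.bypass with
  | nil => left; rfl
  | @cons _ y _ hadj q =>
    right
    rw [hq] at hpb hpath
    rw [SimpleGraph.Walk.cons_isPath_iff] at hpath
    rw [Finset.mem_biUnion]
    refine ⟨y, (G.mem_neighborFinset x y).mpr hadj, ?_⟩
    rw [mem_Kset]
    refine ⟨q, fun a ha => ?_⟩
    rw [Finset.coe_insert, Set.mem_insert_iff]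
    push_neg
    constructor
    · rintro rfl; exact hpath.2 ha
    · exact fun h => hpb a (by rw [SimpleGraph.Walk.support_cons]; exact List.mem_cons_of_mem _ ha) h

/-- every vertex of Rset has a neighbor in Kset -/
lemma Rset_nbr {S : Finset V} {x v : V} (hx : x ∉ S) (hv : v ∈ Rset G S x) :
    ∃ z, z ∈ Kset G S x ∧ G.Adj z v := by
  rw [mem_Rset] at hv
  obtain ⟨p, hok, hpath, hlen, hmin⟩ := exists_min_path hv.2
  have hxv : x ≠ v := fun h => hx (h ▸ hv.1)
  obtain ⟨r, rfl⟩ : ∃ r : G.Walk v x, p = r.reverse := ⟨p.reverse, (p.reverse_reverse).symm⟩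
  have hrpath : r.IsPath := (SimpleGraph.Walk.isPath_reverse_iff r).mp hpath
  have hsupp : ∀ a, a ∈ r.reverse.support ↔ a ∈ r.support := by
    intro a
    rw [SimpleGraph.Walk.support_reverse, List.mem_reverse]
  cases r with
  | nil => exact absurd rfl hxv.symm
  | @cons _ z _ hadj q =>
    rw [SimpleGraph.Walk.cons_isPath_iff] at hrpath
    refine ⟨z, ?_, hadj.symm⟩
    rw [mem_Kset]
    refine ⟨q.reverse, fun a ha => ?_⟩
    rw [SimpleGraph.Walk.support_reverse, List.mem_reverse] at ha
    intro haS
    have hav : a ∈ (SimpleGraph.Walk.cons hadj q).reverse.support := by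
      rw [hsupp, SimpleGraph.Walk.support_cons]
      exact List.mem_cons_of_mem _ ha
    have := hok a hav (by exact_mod_cast haS)
    subst this
    exact hrpath.2 ha

end KR


section Key
variable {V : Type*} {G : SimpleGraph V} [Fintype V] [DecidableEq V] [DecidableRel G.Adj]
set_option linter.unusedSectionVars false

noncomputable def piece (G : SimpleGraph V) (S : Finset V) (x y : V) : Finset V :=
  @Finset.filter V (fun v => tm G (insert x (↑S)) y v ≠ 0) (Classical.decPred _) S

lemma mem_piece {S : Finset V} {x y v : V} :
    v ∈ piece G S x y ↔ v ∈ S ∧ tm G (insert x (↑S)) y v ≠ 0 := by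
  rw [piece, @Finset.mem_filter _ _ (Classical.decPred _)]

lemma piece_subset_Rset {S : Finset V} {x y : V} (hx : x ∉ S) (hadj : G.Adj x y) :
    piece G S x y ⊆ Rset G S x := by
  intro v hv
  rw [mem_piece] at hv
  rw [mem_Rset]
  refine ⟨hv.1, ?_⟩
  have h1 := half_tm_insert_le (G := G) (S := (↑S : Set V)) (x := x) (y := y) (v := v)
    (by exact_mod_cast hx) hadj
  have h2 : (0:ℝ) < tm G (insert x (↑S)) y v :=
    lt_of_le_of_ne (tm_nonneg) (Ne.symm hv.2)
  intro htop
  have h3 : tm G (↑S) x v = 0 := by unfold tm; rw [if_pos htop]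
  rw [h3] at h1
  linarith

lemma piece_of_memS {S : Finset V} {x y : V} (hy : y ∈ S) : piece G S x y = {y} := by
  ext v
  rw [mem_piece, Finset.mem_singleton]
  constructor
  · rintro ⟨hv, hne⟩
    by_contra hvy
    exact hne (tm_eq_zero_of_mem (Set.mem_insert_of_mem _ (by exact_mod_cast hy))
      fun h => hvy h.symm)
  · rintro rfl
    refine ⟨hy, ?_⟩
    rw [tm_self]
    norm_num

lemma Rset_insert_le {S : Finset V} {x y : V} (hx : x ∉ S) :
    (Rset G (insert x S) y).card ≤ 1 + (piece G S x y).card := by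
  have hsub : Rset G (insert x S) y ⊆ insert x (piece G S x y) := by
    intro v hv
    rw [mem_Rset] at hv
    rw [Finset.mem_insert]
    rcases Finset.mem_insert.mp hv.1 with rfl | hvS
    · exact Or.inl rfl
    · right
      rw [mem_piece]
      refine ⟨hvS, ?_⟩
      have : sdist G (insert x (↑S)) y v ≠ ⊤ := by
        have := hv.2
        rwa [Finset.coe_insert] at this
      exact ne_of_gt (tm_pos this)
  calc (Rset G (insert x S) y).card ≤ (insert x (piece G S x y)).card := Finset.card_le_card hsub
    _ ≤ (piece G S x y).card + 1 := Finset.card_insert_le _ _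
    _ = 1 + (piece G S x y).card := by omega

end Key

section Key2
variable {V : Type*} {G : SimpleGraph V} [Fintype V] [DecidableEq V] [DecidableRel G.Adj]
set_option linter.unusedSectionVars false

theorem key (hG : ∀ v, G.degree v ≤ 3) :
    ∀ (m : ℕ) (S : Finset V) (x : V), Fintype.card V - S.card ≤ m → x ∉ S →
      (G.degree x : ℝ) ≤ expWeight G S x →
      (Kset G S x).card + G.degree x ≤ (Rset G S x).card + 1 := by
  intro m
  induction m with
  | zero =>
    intro S x hm hx _
    have : S.card ≤ Fintype.card V := S.card_le_univ
    have hcard : S.card = Fintype.card V := by omega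
    have hU : S = Finset.univ := Finset.eq_univ_of_card S hcard
    subst hU; exact absurd (Finset.mem_univ x) hx
  | succ m ih =>
    intro S x hm hx hge
    set N := G.neighborFinset x with hN
    have hNadj : ∀ y ∈ N, G.Adj x y := fun y hy => (G.mem_neighborFinset x y).mp hy
    have hNcard : N.card = G.degree x := G.card_neighborFinset_eq_degree x
    -- branch sums
    have hB : ∀ y ∈ N, ∑ v ∈ S, (1 / 2 : ℝ) * tm G (insert x (↑S)) y v ≤ 1 := by
      intro y hy
      have hadj := hNadj y hy
      by_cases hyS : y ∈ S
      · rw [bsum_mem hyS]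
      · rw [bsum_not_mem hx hyS hadj]
        have hk : expWeight G (insert x S) y ≤ (G.degree y : ℝ) := by
          refine kraft hG m (insert x S) y ?_ ?_
          · rw [Finset.card_insert_of_notMem hx]; omega
          · simp only [Finset.mem_insert]
            push_neg
            exact ⟨fun h => G.irrefl (h ▸ hadj), hyS⟩
        have : (G.degree y : ℝ) ≤ 3 := by exact_mod_cast hG y
        linarith
    have hstep : expWeight G S x ≤ ∑ y ∈ N, ∑ v ∈ S, (1 / 2 : ℝ) * tm G (insert x (↑S)) y v := by
      rw [expWeight_eq, Finset.sum_comm]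
      exact Finset.sum_le_sum fun v hv => tm_le_cov hx hv
    have hto1 : ∑ y ∈ N, ∑ v ∈ S, (1 / 2 : ℝ) * tm G (insert x (↑S)) y v ≤ (G.degree x : ℝ) := by
      calc _ ≤ ∑ _y ∈ N, (1:ℝ) := Finset.sum_le_sum hB
        _ = (G.degree x : ℝ) := by rw [Finset.sum_const, hNcard]; simp
    -- equalities
    have hBall : ∀ y ∈ N, ∑ v ∈ S, (1 / 2 : ℝ) * tm G (insert x (↑S)) y v = 1 := by
      have h0 : ∑ y ∈ N, ((1:ℝ) - ∑ v ∈ S, (1 / 2 : ℝ) * tm G (insert x (↑S)) y v) = 0 := by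
        rw [Finset.sum_sub_distrib]
        have h1 : ∑ _y ∈ N, (1:ℝ) = (G.degree x : ℝ) := by
          rw [Finset.sum_const, hNcard]; simp
        have h2 : (G.degree x : ℝ) ≤ ∑ y ∈ N, ∑ v ∈ S, (1 / 2 : ℝ) * tm G (insert x (↑S)) y v :=
          le_trans hge hstep
        rw [h1]
        linarith
      intro y hy
      have := (Finset.sum_eq_zero_iff_of_nonneg (fun y hy => by
        have := hB y hy; linarith)).mp h0 y hy
      linarith
    have hcoveq : ∀ v ∈ S, tm G (↑S) x v
        = ∑ y ∈ N, (1 / 2 : ℝ) * tm G (insert x (↑S)) y v := by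
      have hsum1 : ∑ v ∈ S, ∑ y ∈ N, (1 / 2 : ℝ) * tm G (insert x (↑S)) y v
          ≤ ∑ v ∈ S, tm G (↑S) x v := by
        calc ∑ v ∈ S, ∑ y ∈ N, (1 / 2 : ℝ) * tm G (insert x (↑S)) y v
            = ∑ y ∈ N, ∑ v ∈ S, (1 / 2 : ℝ) * tm G (insert x (↑S)) y v := Finset.sum_comm
          _ ≤ (G.degree x : ℝ) := hto1
          _ ≤ expWeight G S x := hge
          _ = ∑ v ∈ S, tm G (↑S) x v := expWeight_eq S x
      have h0 : ∑ v ∈ S, (∑ y ∈ N, (1 / 2 : ℝ) * tm G (insert x (↑S)) y v - tm G (↑S) x v) = 0 := by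
        rw [Finset.sum_sub_distrib]
        have h2 : ∑ v ∈ S, tm G (↑S) x v ≤ ∑ v ∈ S, ∑ y ∈ N, (1 / 2 : ℝ) * tm G (insert x (↑S)) y v :=
          Finset.sum_le_sum fun v hv => tm_le_cov hx hv
        linarith
      intro v hv
      have := (Finset.sum_eq_zero_iff_of_nonneg (fun v hv => by
        have := tm_le_cov (G := G) hx hv; linarith)).mp h0 v hv
      linarith
    -- uniqueness of positive branch
    have huniq : ∀ v ∈ S, ∀ y₁ ∈ N, ∀ y₂ ∈ N, tm G (insert x (↑S)) y₁ v ≠ 0 →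
        tm G (insert x (↑S)) y₂ v ≠ 0 → y₁ = y₂ := by
      intro v hv y₁ hy₁ y₂ hy₂ h₁ h₂
      by_contra hne
      have hpos : ∀ y, (0:ℝ) ≤ (1 / 2) * tm G (insert x (↑S)) y v := fun y => by
        have := tm_nonneg (G := G) (S := insert x (↑S : Set V)) (u := y) (v := v)
        linarith
      have htm0 : tm G (↑S) x v ≠ 0 := by
        have hh := half_tm_insert_le (G := G) (S := (↑S : Set V)) (x := x) (y := y₁) (v := v)
          (by exact_mod_cast hx) (hNadj y₁ hy₁)
        have : (0:ℝ) < tm G (insert x (↑S)) y₁ v := lt_of_le_of_ne tm_nonneg (Ne.symm h₁)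
        intro h0
        rw [h0] at hh
        linarith
      obtain ⟨y₀, hadj₀, hle₀⟩ := exists_branch (by exact_mod_cast hx) (by exact_mod_cast hv) htm0
      have hy₀ : y₀ ∈ N := (G.mem_neighborFinset x y₀).mpr hadj₀
      -- pick y' among y₁ y₂ different from y₀
      obtain ⟨y', hy', hne', h'⟩ : ∃ y', y' ∈ N ∧ y' ≠ y₀ ∧ tm G (insert x (↑S)) y' v ≠ 0 := by
        by_cases h : y₁ = y₀
        · exact ⟨y₂, hy₂, fun hc => hne (h ▸ hc ▸ rfl), h₂⟩
        · exact ⟨y₁, hy₁, h, h₁⟩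
      have hsub : ({y₀, y'} : Finset V) ⊆ N := by
        intro z hz
        rcases Finset.mem_insert.mp hz with rfl | hz
        · exact hy₀
        · rw [Finset.mem_singleton] at hz; subst hz; exact hy'
      have hpair : (1 / 2 : ℝ) * tm G (insert x (↑S)) y₀ v + (1 / 2) * tm G (insert x (↑S)) y' v
          ≤ ∑ y ∈ N, (1 / 2 : ℝ) * tm G (insert x (↑S)) y v := by
        refine le_trans ?_ (Finset.sum_le_sum_of_subset_of_nonneg hsub fun y _ _ => hpos y)
        exact le_of_eq (Finset.sum_pair (f := fun y => (1 / 2 : ℝ) * tm G (insert x (↑S)) y v) (Ne.symm hne')).symm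
      have hcv := hcoveq v hv
      have : (0:ℝ) < tm G (insert x (↑S)) y' v := lt_of_le_of_ne tm_nonneg (Ne.symm h')
      linarith
    -- per-branch piece bounds
    have hpiece : ∀ y ∈ N, (Kset G (insert x S) y).card + 1 ≤ (piece G S x y).card := by
      intro y hy
      have hadj := hNadj y hy
      by_cases hyS : y ∈ S
      · rw [Kset_empty_of_mem (Finset.mem_insert_of_mem hyS), piece_of_memS hyS]
        simp
      · have hyS' : y ∉ insert x S := by
          simp only [Finset.mem_insert]
          push_neg
          exact ⟨fun h => G.irrefl (h ▸ hadj), hyS⟩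
        have hf3 : expWeight G (insert x S) y = 3 := by
          have := hBall y hy
          rw [bsum_not_mem hx hyS hadj] at this
          linarith
        have hdeg3 : G.degree y = 3 := by
          have hk : expWeight G (insert x S) y ≤ (G.degree y : ℝ) := by
            refine kraft hG m (insert x S) y ?_ hyS'
            rw [Finset.card_insert_of_notMem hx]; omega
          rw [hf3] at hk
          have h3 : (3:ℕ) ≤ G.degree y := by exact_mod_cast hk
          have := hG y
          omega
        have hkey := ih (insert x S) y
          (by rw [Finset.card_insert_of_notMem hx]; omega) hyS'
          (by rw [hf3, hdeg3]; norm_num)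
        rw [hdeg3] at hkey
        have := Rset_insert_le (G := G) (S := S) (x := x) (y := y) hx
        omega
    -- disjointness of pieces
    have hdisj : ∀ y₁ ∈ N, ∀ y₂ ∈ N, y₁ ≠ y₂ → Disjoint (piece G S x y₁) (piece G S x y₂) := by
      intro y₁ hy₁ y₂ hy₂ hne
      rw [Finset.disjoint_left]
      intro v hv₁ hv₂
      rw [mem_piece] at hv₁ hv₂
      exact hne (huniq v hv₁.1 y₁ hy₁ y₂ hy₂ hv₁.2 hv₂.2)
    have hsumpiece : ∑ y ∈ N, (piece G S x y).card ≤ (Rset G S x).card := by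
      rw [← Finset.card_biUnion hdisj]
      refine Finset.card_le_card ?_
      intro v hv
      rw [Finset.mem_biUnion] at hv
      obtain ⟨y, hy, hv⟩ := hv
      exact piece_subset_Rset hx (hNadj y hy) hv
    -- K decomposition
    have hK : (Kset G S x).card ≤ 1 + ∑ y ∈ N, (Kset G (insert x S) y).card := by
      calc (Kset G S x).card
          ≤ (insert x (N.biUnion fun y => Kset G (insert x S) y)).card :=
            Finset.card_le_card (Kset_decomp hx)
        _ ≤ (N.biUnion fun y => Kset G (insert x S) y).card + 1 := Finset.card_insert_le _ _
        _ ≤ (∑ y ∈ N, (Kset G (insert x S) y).card) + 1 := by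
            have := Finset.card_biUnion_le (s := N) (t := fun y => Kset G (insert x S) y)
            omega
        _ = 1 + ∑ y ∈ N, (Kset G (insert x S) y).card := by omega
    have hsum2 : ∑ y ∈ N, ((Kset G (insert x S) y).card + 1) ≤ ∑ y ∈ N, (piece G S x y).card :=
      Finset.sum_le_sum hpiece
    rw [Finset.sum_add_distrib, Finset.sum_const, smul_eq_mul, mul_one, hNcard] at hsum2
    omega

end Key2


theorem stmt10 {V : Type*} [Fintype V] (G : SimpleGraph V) [DecidableRel G.Adj]
    (hn : 3 ≤ Fintype.card V) (hG : ∀ v, G.degree v ≤ 3)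
    (S : Finset V) (hS : ∀ u, u ∉ S → 3 ≤ expWeight G S u) :
    (Fintype.card V + 6 : ℝ) / 4 ≤ (S.card : ℝ) := by
  classical
  set n := Fintype.card V with hn'
  set s := S.card with hs'
  have hsn : s ≤ n := S.card_le_univ
  set T := Sᶜ with hT'
  by_cases hT : T = ∅
  · have hSU : S = Finset.univ := by
      have h0 : Sᶜ = (∅ : Finset V) := hT
      rwa [Finset.compl_eq_empty_iff] at h0
    have : s = n := by rw [hs', hSU]; simp [hn']
    rw [← this] at hn
    have h3 : (3:ℝ) ≤ (s:ℝ) := by exact_mod_cast hn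
    have : (n:ℝ) = (s:ℝ) := by exact_mod_cast this.symm
    rw [this]
    linarith
  · have hfact : ∀ u ∈ T, G.degree u = 3 ∧ (Kset G S u).card + 2 ≤ (Rset G S u).card := by
      intro u hu
      have hu' : u ∉ S := Finset.mem_compl.mp hu
      have h3 : (3:ℝ) ≤ expWeight G S u := hS u hu'
      have hk : expWeight G S u ≤ (G.degree u : ℝ) :=
        kraft hG (Fintype.card V) S u (by omega) hu'
      have hdeg3 : G.degree u = 3 := by
        have h3' : (3:ℕ) ≤ G.degree u := by exact_mod_cast le_trans h3 hk
        have := hG u; omega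
      have hkey := key hG (Fintype.card V) S u (by omega) hu'
        (by rw [hdeg3]; exact_mod_cast h3)
      rw [hdeg3] at hkey
      exact ⟨hdeg3, by omega⟩
    set 𝒦 := T.image (fun u => Kset G S u) with h𝒦
    have hV : Nonempty V := Fintype.card_pos_iff.mp (by omega)
    set rep : Finset V → V := fun C =>
      if h : ∃ u, u ∈ T ∧ Kset G S u = C then h.choose else hV.some with hrep'
    have hrep : ∀ C ∈ 𝒦, rep C ∈ T ∧ Kset G S (rep C) = C := by
      intro C hC
      rw [h𝒦, Finset.mem_image] at hC
      obtain ⟨u, hu, hCu⟩ := hC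
      have hex : ∃ u, u ∈ T ∧ Kset G S u = C := ⟨u, hu, hCu⟩
      simp only [hrep']
      rw [dif_pos hex]
      exact hex.choose_spec
    have hCdisj : ∀ C₁ ∈ 𝒦, ∀ C₂ ∈ 𝒦, C₁ ≠ C₂ → Disjoint C₁ C₂ := by
      intro C₁ h₁ C₂ h₂ hne
      rw [Finset.disjoint_left]
      intro z hz₁ hz₂
      obtain ⟨u₁, _, hC₁⟩ := Finset.mem_image.mp h₁
      obtain ⟨u₂, _, hC₂⟩ := Finset.mem_image.mp h₂
      subst hC₁; subst hC₂
      exact hne ((Kset_eq hz₁).trans (Kset_eq hz₂).symm)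
    have htsum : ∑ C ∈ 𝒦, C.card = T.card := by
      have hTparts : T = 𝒦.biUnion (fun C => C) := by
        ext u
        constructor
        · intro hu
          rw [Finset.mem_biUnion]
          exact ⟨Kset G S u, Finset.mem_image_of_mem _ hu,
            mem_Kset_self (Finset.mem_compl.mp hu)⟩
        · intro hu
          rw [Finset.mem_biUnion] at hu
          obtain ⟨C, hC, huC⟩ := hu
          obtain ⟨w, _, hCw⟩ := Finset.mem_image.mp hC
          subst hCw
          exact Finset.mem_compl.mpr (Kset_subset huC)
      rw [hTparts, Finset.card_biUnion hCdisj]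
    have hclass : ∀ C ∈ 𝒦, C.card + 2 ≤ (Rset G S (rep C)).card := by
      intro C hC
      obtain ⟨h1, h2⟩ := hrep C hC
      have := (hfact (rep C) h1).2
      rwa [h2] at this
    have hRsub : ∀ u : V, Rset G S u ⊆ S := by
      intro u v hv
      exact (mem_Rset.mp hv).1
    have hRs : ∀ C ∈ 𝒦, (Rset G S (rep C)).card ≤ s :=
      fun C _ => Finset.card_le_card (hRsub _)
    have hCpos : ∀ C ∈ 𝒦, 1 ≤ C.card := by
      intro C hC
      obtain ⟨h1, h2⟩ := hrep C hC
      have h3 : rep C ∈ Kset G S (rep C) := mem_Kset_self (Finset.mem_compl.mp h1)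
      rw [h2] at h3
      exact Finset.card_pos.mpr ⟨rep C, h3⟩
    -- counting: each v ∈ S is adjacent to at most deg v classes
    have hcount : ∑ C ∈ 𝒦, (Rset G S (rep C)).card ≤ 3 * s := by
      have h1 : ∀ C ∈ 𝒦, (Rset G S (rep C)).card
          = ∑ v ∈ S, (if v ∈ Rset G S (rep C) then 1 else 0) := by
        intro C hC
        have hfR : S.filter (fun v => v ∈ Rset G S (rep C)) = Rset G S (rep C) := by
          ext v
          rw [Finset.mem_filter]
          exact ⟨fun h => h.2, fun h => ⟨hRsub _ h, h⟩⟩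
        conv_lhs => rw [← hfR]
        exact Finset.card_filter _ _
      calc ∑ C ∈ 𝒦, (Rset G S (rep C)).card
          = ∑ C ∈ 𝒦, ∑ v ∈ S, (if v ∈ Rset G S (rep C) then 1 else 0) :=
            Finset.sum_congr rfl h1
        _ = ∑ v ∈ S, ∑ C ∈ 𝒦, (if v ∈ Rset G S (rep C) then 1 else 0) := Finset.sum_comm
        _ ≤ ∑ _v ∈ S, 3 := ?_
        _ = 3 * s := by rw [Finset.sum_const, smul_eq_mul, hs']; ring
      refine Finset.sum_le_sum fun v hv => ?_
      rw [← Finset.card_filter]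
      set g : Finset V → V := fun C =>
        if h : ∃ z, z ∈ C ∧ G.Adj z v then h.choose else hV.some with hg'
      have hmem : ∀ C ∈ 𝒦.filter (fun C => v ∈ Rset G S (rep C)),
          ∃ z, z ∈ C ∧ G.Adj z v := by
        intro C hC
        rw [Finset.mem_filter] at hC
        obtain ⟨h1', h2'⟩ := hrep C hC.1
        obtain ⟨z, hz, hadj⟩ := Rset_nbr (Finset.mem_compl.mp h1') hC.2
        exact ⟨z, h2' ▸ hz, hadj⟩
      have hmaps : ∀ C ∈ 𝒦.filter (fun C => v ∈ Rset G S (rep C)),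
          g C ∈ G.neighborFinset v := by
        intro C hC
        have hex := hmem C hC
        rw [hg']
        simp only [dif_pos hex]
        rw [G.mem_neighborFinset]
        exact hex.choose_spec.2.symm
      have hinj : Set.InjOn g (𝒦.filter (fun C => v ∈ Rset G S (rep C))) := by
        intro C₁ h₁ C₂ h₂ hgg
        rw [Finset.mem_coe] at h₁ h₂
        have hex₁ := hmem C₁ h₁
        have hex₂ := hmem C₂ h₂
        rw [hg'] at hgg
        simp only [dif_pos hex₁, dif_pos hex₂] at hgg
        by_contra hne
        have hd := hCdisj C₁ (Finset.mem_of_mem_filter _ h₁) C₂ (Finset.mem_of_mem_filter _ h₂) hne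
        rw [Finset.disjoint_left] at hd
        exact hd hex₁.choose_spec.1 (hgg ▸ hex₂.choose_spec.1)
      calc (𝒦.filter (fun C => v ∈ Rset G S (rep C))).card
          ≤ (G.neighborFinset v).card := Finset.card_le_card_of_injOn g hmaps hinj
        _ = G.degree v := G.card_neighborFinset_eq_degree v
        _ ≤ 3 := hG v
    -- combine
    have hc1 : 1 ≤ 𝒦.card := by
      exact Finset.card_pos.mpr ((Finset.nonempty_iff_ne_empty.mpr hT).image _)
    have hsum_cls : T.card + 2 * 𝒦.card ≤ ∑ C ∈ 𝒦, (Rset G S (rep C)).card := by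
      have := Finset.sum_le_sum hclass
      rw [Finset.sum_add_distrib, htsum, Finset.sum_const, smul_eq_mul] at this
      omega
    have hs3 : 3 ≤ s := by
      obtain ⟨C, hC⟩ := Finset.card_pos.mp hc1
      have := hclass C hC
      have h2 := hRs C hC
      have h3 := hCpos C hC
      omega
    have hmain : T.card + 6 ≤ 3 * s := by
      by_cases hc : 3 ≤ 𝒦.card
      · omega
      · have hTb : T.card ≤ 𝒦.card * (s - 2) := by
          rw [← htsum]
          calc ∑ C ∈ 𝒦, C.card ≤ ∑ C ∈ 𝒦, (s - 2) := by
                refine Finset.sum_le_sum fun C hC => ?_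
                have := hclass C hC
                have h2 := hRs C hC
                omega
            _ = 𝒦.card * (s - 2) := by rw [Finset.sum_const, smul_eq_mul]
        have : 𝒦.card * (s - 2) ≤ 2 * (s - 2) := by
          have : 𝒦.card ≤ 2 := by omega
          exact Nat.mul_le_mul_right _ this
        omega
    have hfinal : n + 6 ≤ 4 * s := by
      have hTc : T.card = n - s := by rw [hT', Finset.card_compl]
      omega
    have : ((n : ℝ) + 6) ≤ 4 * (s : ℝ) := by exact_mod_cast hfinal
    linarith
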